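/- For α ∈ [-1,1], let F_α(z) = z(1-αz)/(1-z²). Then zF_α'(z) = (z/(1-z²))·P₁(z) where P₁(z) = (1+z²-2αz)/(1-z²) has real Taylor coefficients, P₁(0) = 1, and Re P₁(z) > 0 on the open unit disk; hence zF_α' is typically real. -/

import Mathlib

/-!
Writing `P(z) = (1 + z² - 2αz)/(1 - z²)`, partial fractions give the convex combinations
`P(z) = (1-α)/2 · (1+z)/(1-z) + (1+α)/2 · (1-z)/(1+z)` and
`z F'(z) = (1-α)/2 · z/(1-z)² + (1+α)/2 · z/(1+z)²`.
On the unit disk `Re((1+z)/(1-z)) = (1-|z|²)/|1-z|² > 0`, and the Koebe function satisfies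
`Im(z/(1-z)²) = Im z · (1-|z|²)/|1-z|⁴`, so `Re P > 0` and `Im(z F'(z))` is `Im z` times a
positive factor.
-/

open Complex

theorem one_sub_ne_zero_of_norm_lt_one {z : ℂ} (hz : ‖z‖ < 1) : 1 - z ≠ 0 := by
  intro h
  rw [sub_eq_zero] at h
  simp [← h] at hz

theorem one_add_ne_zero_of_norm_lt_one {z : ℂ} (hz : ‖z‖ < 1) : 1 + z ≠ 0 := by
  simpa using one_sub_ne_zero_of_norm_lt_one (z := -z) (by simpa using hz)

theorem one_sub_sq_ne_zero {z : ℂ} (hz : ‖z‖ < 1) : 1 - z ^ 2 ≠ 0 := by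
  rw [show 1 - z ^ 2 = (1 - z) * (1 + z) by ring]
  exact mul_ne_zero (one_sub_ne_zero_of_norm_lt_one hz) (one_add_ne_zero_of_norm_lt_one hz)

theorem one_sub_norm_sq_pos {z : ℂ} (hz : ‖z‖ < 1) : 0 < 1 - ‖z‖ ^ 2 := by
  nlinarith [norm_nonneg z]

theorem convexComb_pos {α u v : ℝ} (hα : α ∈ Set.Icc (-1 : ℝ) 1) (hu : 0 < u)
    (hv : 0 < v) :
    0 < (1 - α) / 2 * u + (1 + α) / 2 * v := by
  have := convex_Ioi (0 : ℝ) (Set.mem_Ioi.mpr hu) (Set.mem_Ioi.mpr hv)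
    (by linarith [hα.2] : 0 ≤ (1 - α) / 2) (by linarith [hα.1] : 0 ≤ (1 + α) / 2) (by ring)
  simpa using this

theorem re_one_add_div_one_sub (z : ℂ) :
    ((1 + z) / (1 - z)).re = (1 - ‖z‖ ^ 2) / ‖1 - z‖ ^ 2 := by
  rw [div_re, ← add_div, Complex.sq_norm, Complex.sq_norm]
  simp [normSq_apply]
  ring

theorem re_one_add_div_one_sub_pos {z : ℂ} (hz : ‖z‖ < 1) : 0 < ((1 + z) / (1 - z)).re := by
  have h1 : 0 < ‖1 - z‖ := norm_pos_iff.mpr (one_sub_ne_zero_of_norm_lt_one hz)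
  rw [re_one_add_div_one_sub]
  exact div_pos (one_sub_norm_sq_pos hz) (by positivity)

theorem im_div_one_sub_sq (z : ℂ) :
    (z / (1 - z) ^ 2).im = z.im * ((1 - ‖z‖ ^ 2) / ‖1 - z‖ ^ 4) := by
  rw [div_im, ← sub_div, Complex.sq_norm, show ‖1 - z‖ ^ 4 = normSq ((1 - z) ^ 2) by
    rw [map_pow, ← Complex.sq_norm]; ring, mul_div_assoc']
  simp [normSq_apply, pow_two]
  ring

theorem im_div_one_add_sq (z : ℂ) :
    (z / (1 + z) ^ 2).im = z.im * ((1 - ‖z‖ ^ 2) / ‖1 + z‖ ^ 4) := by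
  simpa [neg_div] using im_div_one_sub_sq (-z)

theorem hasDerivAt_mul_one_sub_mul_div_one_sub_sq (α : ℂ) {z : ℂ} (hz : 1 - z ^ 2 ≠ 0) :
    HasDerivAt (fun w : ℂ => w * (1 - α * w) / (1 - w ^ 2))
      ((1 + z ^ 2 - 2 * α * z) / (1 - z ^ 2) ^ 2) z :=
  (((hasDerivAt_id' z).fun_mul (((hasDerivAt_id' z).const_mul α).const_sub 1)).fun_div
    ((hasDerivAt_pow 2 z).const_sub 1) hz).congr_deriv (by norm_num; ring)

theorem div_one_sub_sq_eq_convexComb (α : ℝ) {z : ℂ} (h₁ : 1 - z ≠ 0)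
    (h₂ : 1 + z ≠ 0) :
    (1 + z ^ 2 - 2 * α * z) / (1 - z ^ 2) =
      ((1 - α) / 2 : ℝ) * ((1 + z) / (1 - z)) + ((1 + α) / 2 : ℝ) * ((1 - z) / (1 + z)) := by
  rw [show 1 - z ^ 2 = (1 - z) * (1 + z) by ring]
  field_simp
  push_cast
  ring

theorem mul_div_one_sub_sq_sq_eq_convexComb (α : ℝ) {z : ℂ} (h₁ : 1 - z ≠ 0)
    (h₂ : 1 + z ≠ 0) :
    z * ((1 + z ^ 2 - 2 * α * z) / (1 - z ^ 2) ^ 2) =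
      ((1 - α) / 2 : ℝ) * (z / (1 - z) ^ 2) + ((1 + α) / 2 : ℝ) * (z / (1 + z) ^ 2) := by
  rw [show 1 - z ^ 2 = (1 - z) * (1 + z) by ring]
  field_simp
  push_cast
  ring

theorem stmt_18 (α : ℝ) (hα : α ∈ Set.Icc (-1 : ℝ) 1) :
    (∀ z : ℂ, ‖z‖ < 1 →
      z * deriv (fun w : ℂ => w * (1 - (α : ℂ) * w) / (1 - w ^ 2)) z =
        z / (1 - z ^ 2) * ((1 + z ^ 2 - 2 * (α : ℂ) * z) / (1 - z ^ 2))) ∧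
    ((1 + (0 : ℂ) ^ 2 - 2 * (α : ℂ) * 0) / (1 - (0 : ℂ) ^ 2) = 1) ∧
    (∀ z : ℂ, ‖z‖ < 1 →
      (1 + (starRingEnd ℂ) z ^ 2 - 2 * (α : ℂ) * (starRingEnd ℂ) z) /
          (1 - (starRingEnd ℂ) z ^ 2) =
        (starRingEnd ℂ) ((1 + z ^ 2 - 2 * (α : ℂ) * z) / (1 - z ^ 2))) ∧
    (∀ z : ℂ, ‖z‖ < 1 → 0 < ((1 + z ^ 2 - 2 * (α : ℂ) * z) / (1 - z ^ 2)).re) ∧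
    (∀ z : ℂ, ‖z‖ < 1 →
      ((z * deriv (fun w : ℂ => w * (1 - (α : ℂ) * w) / (1 - w ^ 2)) z).im = 0 ↔
        z.im = 0)) := by
  refine ⟨fun z hz => ?_, by norm_num, fun z _ => by simp [map_ofNat], fun z hz => ?_,
    fun z hz => ?_⟩
  · rw [(hasDerivAt_mul_one_sub_mul_div_one_sub_sq α (one_sub_sq_ne_zero hz)).deriv,
      div_mul_div_comm, ← sq, mul_div_assoc]
  · have h₁ := one_sub_ne_zero_of_norm_lt_one hz
    have h₂ := one_add_ne_zero_of_norm_lt_one hz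
    rw [div_one_sub_sq_eq_convexComb α h₁ h₂, add_re, re_ofReal_mul, re_ofReal_mul]
    refine convexComb_pos hα (re_one_add_div_one_sub_pos hz) ?_
    simpa [← sub_eq_add_neg] using re_one_add_div_one_sub_pos (z := -z) (by simpa using hz)
  · have h₁ := one_sub_ne_zero_of_norm_lt_one hz
    have h₂ := one_add_ne_zero_of_norm_lt_one hz
    rw [(hasDerivAt_mul_one_sub_mul_div_one_sub_sq α (one_sub_sq_ne_zero hz)).deriv,
      mul_div_one_sub_sq_sq_eq_convexComb α h₁ h₂, add_im, im_ofReal_mul, im_ofReal_mul,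
      im_div_one_sub_sq, im_div_one_add_sq]
    have hpos := convexComb_pos hα
      (div_pos (one_sub_norm_sq_pos hz) (pow_pos (norm_pos_iff.mpr h₁) 4))
      (div_pos (one_sub_norm_sq_pos hz) (pow_pos (norm_pos_iff.mpr h₂) 4))
    rw [mul_left_comm _ z.im, mul_left_comm _ z.im, ← mul_add, mul_eq_zero,
      or_iff_left hpos.ne']
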